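/- arXiv:1805.05626 — 3 statements merged into one kernel-verified Lean document; each statement's English description precedes it below -/
import Mathlib

section
/- Let P and Q be two distinct points of 𝔽_q² and let i, j be integers with 0 ≤ i, j ≤ q+1. Then the probability, with respect to the uniform measure on Ω, that P has multiplicity i and Q has multiplicity j is P{M_P = i and M_Q = j} = [ (q! / ((i−1)!(j−1)!(q−i−j+2)!))·(q−2)^{q−i−j+2} + (q! / (i! j! (q−i−j)!))·(q−1)·(q−2)^{q−i−j} ] / q^{q+1}, where a multinomial coefficient is taken to be 0 whenever one of its lower arguments is negative (the first summand corresponds to the line (PQ) belonging to the arrangement, the second to it not belonging). -/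
open Finset

/-- `memLine s c P` says that the point `P ∈ 𝔽_q²` lies on the line `l(s, c)`:
for `s = some m` (slope `m ∈ 𝔽_q`) this is the line `y = m·x + c`,
and for `s = none` (slope `∞`) this is the vertical line `x = c`. -/
def memLine {F : Type*} [Field F] (s : Option F) (c : F) (P : F × F) : Prop :=
  match s with
  | none => P.1 = c
  | some m => P.2 = m * P.1 + c

instance {F : Type*} [Field F] [DecidableEq F] :
    ∀ (s : Option F) (c : F) (P : F × F), Decidable (memLine s c P)
  | none, c, P => inferInstanceAs (Decidable (P.1 = c))
  | some m, c, P => inferInstanceAs (Decidable (P.2 = m * P.1 + c))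

/-- The multiplicity of the point `P` in the minimal Besicovitch arrangement
`B = ⋃_{i ∈ 𝔽_q ∪ {∞}} l(i, b i)` determined by `b : 𝔽_q ∪ {∞} → 𝔽_q`,
i.e. the number of slopes `i` with `P ∈ l(i, b i)`. -/
def multPt {F : Type*} [Field F] [Fintype F] [DecidableEq F]
    (b : Option F → F) (P : F × F) : ℕ :=
  (Finset.univ.filter fun i : Option F => memLine i (b i) P).card

/-- `xCount b m` is `x_m^B`: the number of points of `𝔽_q²` of multiplicity
exactly `m` in the minimal Besicovitch arrangement determined by `b`. -/
def xCount {F : Type*} [Field F] [Fintype F] [DecidableEq F]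
    (b : Option F → F) (m : ℕ) : ℕ :=
  (Finset.univ.filter fun P : F × F => multPt b P = m).card

/-- The multinomial coefficient `n! / (a! b! c!)`, taken to be `0` whenever one of the
lower arguments `a`, `b`, `c` is (strictly) negative. -/
def multinom (n : ℕ) (a b c : ℤ) : ℕ :=
  if 0 ≤ a ∧ 0 ≤ b ∧ 0 ≤ c then
    n.factorial / (a.toNat.factorial * b.toNat.factorial * c.toNat.factorial)
  else 0

/-! The multiplicity of `R` in the arrangement `b` is the number of slopes `s` at which `b s`
equals the intercept `c_R(s)` of the line of slope `s` through `R`. For `P ≠ Q` the intercept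
functions `c_P` and `c_Q` agree at exactly one slope `s₀`, that of the line `PQ`. Either
`b s₀ = c_P(s₀)`, i.e. `PQ` belongs to the arrangement and adds one to both multiplicities, or
`b s₀` is one of the `q - 1` other values and adds to neither. On the remaining `q` slopes `c_P`
and `c_Q` differ everywhere, so an arrangement agreeing with them on prescribed disjoint sets of
sizes `a` and `c` is free to take any of `q - 2` values elsewhere; there are
`C(q, a) · C(q - a, c) = q! / (a! c! (q - a - c)!)` such pairs of sets. -/

lemma card_filter_disjoint_powersetCard_product {α : Type*} [DecidableEq α] (s : Finset α)
    (a c : ℕ) :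
    #{p ∈ s.powersetCard a ×ˢ s.powersetCard c | Disjoint p.1 p.2}
      = (#s).choose a * (#s - a).choose c := by
  have hfiber (A : Finset α) (hA : A ∈ s.powersetCard a) :
      #{B ∈ s.powersetCard c | Disjoint A B} = (#s - a).choose c := by
    obtain ⟨hAs, rfl⟩ := mem_powersetCard.1 hA
    rw [← card_sdiff_of_subset hAs, ← card_powersetCard]
    congr 1
    ext B
    simp only [mem_filter, mem_powersetCard, subset_sdiff, disjoint_comm (a := A)]
    tauto
  rw [card_filter, sum_product]
  simp_rw [← card_filter]
  rw [sum_congr rfl hfiber, sum_const, card_powersetCard, smul_eq_mul]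

lemma multinom_eq_choose_mul_choose (n a c : ℕ) :
    multinom n a c ((n : ℤ) - a - c) = n.choose a * (n - a).choose c := by
  by_cases hac : a + c ≤ n
  · have hnat : ((n : ℤ) - a - c).toNat = n - a - c := by omega
    rw [multinom, if_pos (by omega), Int.toNat_natCast, Int.toNat_natCast, hnat]
    have hfact : n.factorial = n.choose a * (n - a).choose c
        * (a.factorial * c.factorial * (n - a - c).factorial) := by
      rw [← Nat.choose_mul_factorial_mul_factorial (show a ≤ n by omega),
        ← Nat.choose_mul_factorial_mul_factorial (show c ≤ n - a by omega)]
      ring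
    rw [hfact, Nat.mul_div_cancel _ (by positivity)]
  · rw [multinom, if_neg (by omega)]
    rcases le_or_gt a n with han | han
    · rw [Nat.choose_eq_zero_of_lt (show n - a < c by omega), mul_zero]
    · rw [Nat.choose_eq_zero_of_lt han, zero_mul]

lemma card_filter_eq_sum_funSplitAt {α F : Type*} [Fintype α] [DecidableEq α] [Fintype F]
    (s₀ : α) (p : (α → F) → Prop) [DecidablePred p] :
    #{b | p b} = ∑ v : F, #{b : {s // s ≠ s₀} → F | p ((Equiv.funSplitAt s₀ F).symm (v, b))} := by
  rw [← card_map (Equiv.funSplitAt s₀ F).toEmbedding, map_filter, map_univ_equiv, card_filter,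
    Fintype.sum_prod_type]
  simp_rw [← card_filter]
  rfl

section AgreeSet

variable {α F : Type*} [Fintype α] [DecidableEq F]

def agreeSet (b f : α → F) : Finset α := {s | b s = f s}

lemma disjoint_agreeSet {f g : α → F} (hfg : ∀ s, f s ≠ g s) (b : α → F) :
    Disjoint (agreeSet b f) (agreeSet b g) := by
  simp only [agreeSet, disjoint_filter]
  exact fun s _ hf hg => hfg s (hf ▸ hg)

variable [DecidableEq α]

lemma card_agreeSet_funSplitAt_symm (s₀ : α) (v : F) (b : {s // s ≠ s₀} → F) (f : α → F) :
    #(agreeSet ((Equiv.funSplitAt s₀ F).symm (v, b)) f)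
      = (if v = f s₀ then 1 else 0) + #(agreeSet b (f ∘ Subtype.val)) := by
  simp only [agreeSet, card_filter]
  rw [Fintype.sum_eq_add_sum_subtype_ne _ s₀]
  congr 1
  · simp
  · refine sum_congr rfl fun x _ => ?_
    simp [x.2]

variable [Fintype F]

lemma card_filter_agreeSet_eq_and_eq {f g : α → F} (hfg : ∀ s, f s ≠ g s) {A B : Finset α}
    (hAB : Disjoint A B) :
    #{b : α → F | agreeSet b f = A ∧ agreeSet b g = B}
      = (Fintype.card F - 2) ^ (Fintype.card α - #A - #B) := by
  let t : α → Finset F := fun s =>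
    if s ∈ A then {f s} else if s ∈ B then {g s} else {f s, g s}ᶜ
  have hfilter : ({b : α → F | agreeSet b f = A ∧ agreeSet b g = B} : Finset _)
      = Fintype.piFinset t := by
    ext b
    simp only [agreeSet, Finset.ext_iff, mem_filter, mem_univ, true_and, Fintype.mem_piFinset,
      ← forall_and, t]
    refine forall_congr' fun s => ?_
    have := hfg s
    have : s ∈ A → s ∉ B := fun h => disjoint_left.1 hAB h
    split_ifs <;> simp only [mem_singleton, mem_compl, mem_insert, not_or] <;> grind
  have hcard (s : α) : #(t s) = if s ∈ (A ∪ B)ᶜ then Fintype.card F - 2 else 1 := by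
    have := hfg s
    by_cases hA : s ∈ A <;> by_cases hB : s ∈ B <;> simp_all [t, card_compl, Nat.sub_sub]
  rw [hfilter, Fintype.card_piFinset, Fintype.prod_congr _ _ hcard, Fintype.prod_ite_mem,
    prod_const, card_compl, card_union_of_disjoint hAB, Nat.sub_sub]

lemma card_filter_card_agreeSet_eq {f g : α → F} (hfg : ∀ s, f s ≠ g s) (a c : ℕ) :
    #{b : α → F | #(agreeSet b f) = a ∧ #(agreeSet b g) = c}
      = (Fintype.card α).choose a * (Fintype.card α - a).choose c
          * (Fintype.card F - 2) ^ (Fintype.card α - a - c) := by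
  set T : Finset (Finset α × Finset α) :=
    {p ∈ (univ : Finset α).powersetCard a ×ˢ univ.powersetCard c | Disjoint p.1 p.2}
  have hmaps : ∀ b ∈ ({b : α → F | #(agreeSet b f) = a ∧ #(agreeSet b g) = c} : Finset _),
      (agreeSet b f, agreeSet b g) ∈ T := by
    intro b hb
    simp only [mem_filter, mem_univ, true_and] at hb
    simp [T, mem_powersetCard, hb, disjoint_agreeSet hfg]
  have hfiber : ∀ p ∈ T,
      #{b ∈ ({b : α → F | #(agreeSet b f) = a ∧ #(agreeSet b g) = c} : Finset _) |
        (agreeSet b f, agreeSet b g) = p} = (Fintype.card F - 2) ^ (Fintype.card α - a - c) := by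
    rintro ⟨A, B⟩ hp
    simp only [T, mem_filter, mem_product, mem_powersetCard] at hp
    obtain ⟨⟨⟨-, rfl⟩, -, rfl⟩, hAB⟩ := hp
    rw [← card_filter_agreeSet_eq_and_eq hfg hAB, filter_filter]
    congr 1
    ext b
    simp only [mem_filter, mem_univ, true_and, Prod.mk.injEq]
    constructor
    · exact And.right
    · rintro ⟨rfl, rfl⟩; exact ⟨⟨rfl, rfl⟩, rfl, rfl⟩
  rw [card_eq_sum_card_fiberwise hmaps, sum_congr rfl hfiber, sum_const, smul_eq_mul,
    card_filter_disjoint_powersetCard_product, card_univ]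

lemma card_filter_card_agreeSet_eq_multinom (hF : 2 ≤ Fintype.card F) {f g : α → F}
    (hfg : ∀ s, f s ≠ g s) (a c : ℤ) :
    (#{b : α → F | (#(agreeSet b f) : ℤ) = a ∧ (#(agreeSet b g) : ℤ) = c} : ℝ)
      = multinom (Fintype.card α) a c (Fintype.card α - a - c)
          * ((Fintype.card F : ℝ) - 2) ^ ((Fintype.card α : ℤ) - a - c) := by
  set n := Fintype.card α
  by_cases hac : 0 ≤ a ∧ 0 ≤ c
  · obtain ⟨a, rfl⟩ := Int.eq_ofNat_of_zero_le hac.1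
    obtain ⟨c, rfl⟩ := Int.eq_ofNat_of_zero_le hac.2
    simp only [Nat.cast_inj]
    rw [card_filter_card_agreeSet_eq hfg, multinom_eq_choose_mul_choose]
    by_cases hle : a + c ≤ n
    · rw [show (n : ℤ) - a - c = ((n - a - c : ℕ) : ℤ) by omega, zpow_natCast]
      push_cast [Nat.cast_sub hF]
      ring
    · have hzero : n.choose a * (n - a).choose c = 0 := by
        rw [← multinom_eq_choose_mul_choose, multinom, if_neg (by omega)]
      rw [Nat.cast_mul, hzero]
      simp
  · have hempty : ({b : α → F | (#(agreeSet b f) : ℤ) = a ∧ (#(agreeSet b g) : ℤ) = c} : Finset _)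
        = ∅ :=
      filter_false_of_mem fun b _ ⟨ha, hc⟩ => hac ⟨ha ▸ by positivity, hc ▸ by positivity⟩
    rw [hempty, multinom, if_neg (by tauto)]
    simp

lemma card_filter_agreeSet_split {f g : α → F} {s₀ : α} (h : f s₀ = g s₀)
    (p : ℕ → ℕ → Prop) [DecidableRel p] :
    #{b : α → F | p #(agreeSet b f) #(agreeSet b g)}
      = #{b : {s // s ≠ s₀} → F |
          p (#(agreeSet b (f ∘ Subtype.val)) + 1) (#(agreeSet b (g ∘ Subtype.val)) + 1)}
        + (Fintype.card F - 1) * #{b : {s // s ≠ s₀} → F |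
          p #(agreeSet b (f ∘ Subtype.val)) #(agreeSet b (g ∘ Subtype.val))} := by
  rw [card_filter_eq_sum_funSplitAt s₀, Fintype.sum_eq_add_sum_subtype_ne _ (f s₀)]
  simp only [card_agreeSet_funSplitAt_symm, ← h, if_true, add_comm 1]
  congr 1
  have hne (v : {v // v ≠ f s₀}) : (if (v : F) = f s₀ then 1 else 0) = 0 := if_neg v.2
  simp only [hne, zero_add, sum_const, card_univ, Fintype.card_subtype_compl,
    Fintype.card_unique, smul_eq_mul]

lemma card_filter_card_agreeSet_eq_of_eq_iff (hF : 2 ≤ Fintype.card F) {f g : α → F} {s₀ : α}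
    (hfg : ∀ s, f s = g s ↔ s = s₀) (i j : ℕ) :
    (#{b : α → F | #(agreeSet b f) = i ∧ #(agreeSet b g) = j} : ℝ)
      = multinom (Fintype.card {s // s ≠ s₀}) ((i : ℤ) - 1) ((j : ℤ) - 1)
            (Fintype.card {s // s ≠ s₀} - i - j + 2)
          * ((Fintype.card F : ℝ) - 2) ^ ((Fintype.card {s // s ≠ s₀} : ℤ) - i - j + 2)
        + multinom (Fintype.card {s // s ≠ s₀}) i j (Fintype.card {s // s ≠ s₀} - i - j)
          * ((Fintype.card F : ℝ) - 1)
          * ((Fintype.card F : ℝ) - 2) ^ ((Fintype.card {s // s ≠ s₀} : ℤ) - i - j) := by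
  set f' : {s // s ≠ s₀} → F := f ∘ Subtype.val
  set g' : {s // s ≠ s₀} → F := g ∘ Subtype.val
  have hfg' (s : {s // s ≠ s₀}) : f' s ≠ g' s := fun h => s.2 ((hfg s).1 h)
  have hshift : #{b : {s // s ≠ s₀} → F | #(agreeSet b f') + 1 = i ∧ #(agreeSet b g') + 1 = j}
      = #{b | (#(agreeSet b f') : ℤ) = i - 1 ∧ (#(agreeSet b g') : ℤ) = j - 1} := by
    congr 1
    ext b
    simp only [mem_filter, mem_univ, true_and]
    omega
  have hcast : #{b : {s // s ≠ s₀} → F | #(agreeSet b f') = i ∧ #(agreeSet b g') = j}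
      = #{b | (#(agreeSet b f') : ℤ) = i ∧ (#(agreeSet b g') : ℤ) = j} := by
    simp only [Nat.cast_inj]
  rw [card_filter_agreeSet_split ((hfg s₀).2 rfl) (fun m n => m = i ∧ n = j), hshift, hcast,
    Nat.cast_add, Nat.cast_mul, Nat.cast_sub (by omega),
    card_filter_card_agreeSet_eq_multinom hF hfg', card_filter_card_agreeSet_eq_multinom hF hfg']
  push_cast
  ring_nf

end AgreeSet

section Lines

variable {F : Type*} [Field F]

def intercept (P : F × F) : Option F → F
  | none => P.1
  | some m => P.2 - m * P.1

lemma memLine_iff_eq_intercept {s : Option F} {c : F} {P : F × F} :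
    memLine s c P ↔ c = intercept P s := by
  cases s with
  | none => exact eq_comm
  | some m => simp only [memLine, intercept, eq_sub_iff_add_eq, add_comm c, eq_comm]

variable [DecidableEq F]

def lineSlope (P Q : F × F) : Option F :=
  if P.1 = Q.1 then none else some ((P.2 - Q.2) / (P.1 - Q.1))

lemma intercept_eq_intercept_iff {P Q : F × F} (hPQ : P ≠ Q) (s : Option F) :
    intercept P s = intercept Q s ↔ s = lineSlope P Q := by
  unfold lineSlope
  split_ifs with h
  · cases s with
    | none => simpa [intercept] using h
    | some m =>
      simp only [intercept, reduceCtorEq, iff_false, h]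
      exact fun he => hPQ (Prod.ext h (by linear_combination he))
  · have hsub : P.1 - Q.1 ≠ 0 := sub_ne_zero.2 h
    cases s with
    | none => simpa [intercept] using h
    | some m =>
      rw [intercept, intercept, Option.some_inj, eq_div_iff hsub]
      constructor <;> intro he <;> linear_combination -he

lemma multPt_eq_card_agreeSet [Fintype F] (b : Option F → F) (R : F × F) :
    multPt b R = #(agreeSet b (intercept R)) := by
  simp only [multPt, agreeSet, memLine_iff_eq_intercept]

end Lines

theorem stmt3_general {F : Type*} [Field F] [Fintype F] [DecidableEq F]
    (q : ℕ) (hq : Fintype.card F = q)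
    (P Q : F × F) (hPQ : P ≠ Q) (i j : ℕ) :
    ((Finset.univ.filter fun b : Option F → F => multPt b P = i ∧ multPt b Q = j).card : ℝ)
        / (q : ℝ) ^ (q + 1)
      = ((multinom q ((i : ℤ) - 1) ((j : ℤ) - 1) ((q : ℤ) - i - j + 2) : ℝ)
            * ((q : ℝ) - 2) ^ ((q : ℤ) - i - j + 2)
          + (multinom q i j ((q : ℤ) - i - j) : ℝ)
            * ((q : ℝ) - 1) * ((q : ℝ) - 2) ^ ((q : ℤ) - i - j))
        / (q : ℝ) ^ (q + 1) := by
  have hslopes : Fintype.card {s : Option F // s ≠ lineSlope P Q} = q := by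
    simp [Fintype.card_subtype_compl, hq]
  simp only [multPt_eq_card_agreeSet]
  rw [card_filter_card_agreeSet_eq_of_eq_iff Fintype.one_lt_card (intercept_eq_intercept_iff hPQ),
    hslopes, hq]

/-- For distinct points `P ≠ Q` of `𝔽_q²` and `0 ≤ i, j ≤ q+1`, the probability (w.r.t. the
uniform measure on `Ω`, which assigns mass `q^{-(q+1)}` to each arrangement) that `P` has
multiplicity `i` and `Q` has multiplicity `j` is
`[ (q!/((i−1)!(j−1)!(q−i−j+2)!))·(q−2)^{q−i−j+2} + (q!/(i!j!(q−i−j)!))·(q−1)·(q−2)^{q−i−j} ] / q^{q+1}`,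
multinomial coefficients being `0` when a lower argument is negative. -/
theorem stmt3 {F : Type*} [Field F] [Fintype F] [DecidableEq F]
    (q : ℕ) (hq : Fintype.card F = q)
    (P Q : F × F) (hPQ : P ≠ Q) (i j : ℕ) (hi : i ≤ q + 1) (hj : j ≤ q + 1) :
    ((Finset.univ.filter fun b : Option F → F => multPt b P = i ∧ multPt b Q = j).card : ℝ)
        / (q : ℝ) ^ (q + 1)
      = ((multinom q ((i : ℤ) - 1) ((j : ℤ) - 1) ((q : ℤ) - i - j + 2) : ℝ)
            * ((q : ℝ) - 2) ^ ((q : ℤ) - i - j + 2)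
          + (multinom q i j ((q : ℤ) - i - j) : ℝ)
            * ((q : ℝ) - 1) * ((q : ℝ) - 2) ^ ((q : ℤ) - i - j))
        / (q : ℝ) ^ (q + 1) :=
  stmt3_general q hq P Q hPQ i j
end

section
/- For every minimal Besicovitch arrangement B in 𝔽_q², the number of points of multiplicity 1 satisfies x_1^B = Σ_{m=3}^{q+1} (m² − 2m)·x_m^B. -/
/-!
Double counting incidences between the `q + 1` lines and the points of `𝔽_q²`: every line has
`q` points, so `∑_P m_P = (q + 1) q`; any two lines have different slopes and meet in exactly
one point, so counting ordered pairs of lines through a point gives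
`∑_P m_P² = (q + 1) q + (q + 1) q`. Hence `∑_P (m_P² - 2 m_P) = 0`, i.e. in terms of the `x_m`,
`-x_1 + ∑_{m ≥ 3} (m² - 2m) x_m = 0` since the terms `m = 0, 2` vanish.
-/

open Finset

section DoubleCounting

variable {ι α : Type*} [Fintype ι] [Fintype α] (R : ι → α → Prop) [∀ i a, Decidable (R i a)]

theorem sum_card_filter_rel (k : ℕ) (hk : ∀ i, #{a | R i a} = k) :
    ∑ a, #{i | R i a} = Fintype.card ι * k := by
  have := sum_card_bipartiteAbove_eq_sum_card_bipartiteBelow (s := univ) (t := univ) R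
  simp only [bipartiteAbove, bipartiteBelow, hk, sum_const, card_univ, smul_eq_mul] at this
  exact this.symm

theorem sum_sq_card_filter_rel :
    ∑ a, #{i | R i a} ^ 2 = ∑ i, ∑ j, #{a | R i a ∧ R j a} := by
  have hsq : ∀ a, #{i | R i a} ^ 2 = #{ij : ι × ι | R ij.1 a ∧ R ij.2 a} := fun a => by
    rw [sq, ← card_product, ← filter_product, univ_product_univ]
  simp_rw [hsq]
  have := sum_card_bipartiteAbove_eq_sum_card_bipartiteBelow (s := univ) (t := univ)
    (fun (ij : ι × ι) a => R ij.1 a ∧ R ij.2 a)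
  simp only [bipartiteAbove, bipartiteBelow] at this
  rw [← this, Fintype.sum_prod_type]

theorem sum_sq_card_filter_rel_eq_two_mul [DecidableEq ι] (k : ℕ) (hι : Fintype.card ι = k + 1)
    (hk : ∀ i, #{a | R i a} = k) (hmeet : ∀ i j, i ≠ j → #{a | R i a ∧ R j a} = 1) :
    ∑ a, #{i | R i a} ^ 2 = 2 * ∑ a, #{i | R i a} := by
  have hrow : ∀ i, ∑ j, #{a | R i a ∧ R j a} = 2 * k := fun i => by
    rw [Fintype.sum_eq_add_sum_compl i,
      sum_congr rfl fun j hj => hmeet i j (by simpa [eq_comm] using hj)]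
    simp only [and_self, hk, sum_const, card_compl, hι, card_singleton, add_tsub_cancel_right,
      smul_eq_mul, mul_one, two_mul]
  rw [sum_sq_card_filter_rel, sum_congr rfl fun i _ => hrow i, sum_card_filter_rel R k hk]
  simp only [sum_const, card_univ, hι, smul_eq_mul]
  ring

end DoubleCounting

-- In `ℕ`, `1 ^ 2 - 2 * 1 = 0`: the truncation is exactly what produces the `x_1` term.
theorem Nat.sq_sub_two_mul_add_two_mul (n : ℕ) :
    n ^ 2 - 2 * n + 2 * n = n ^ 2 + if n = 1 then 1 else 0 := by
  rcases n with _ | _ | n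
  · simp
  · simp
  · rw [if_neg (by omega), add_zero, Nat.sub_add_cancel (by nlinarith)]

theorem card_filter_eq_one_eq_sum_sq_sub_two_mul {α : Type*} [Fintype α] (f : α → ℕ)
    (h : ∑ a, f a ^ 2 = 2 * ∑ a, f a) :
    #{a | f a = 1} = ∑ a, (f a ^ 2 - 2 * f a) := by
  have key : ∑ a, (f a ^ 2 - 2 * f a) + 2 * ∑ a, f a = ∑ a, f a ^ 2 + #{a | f a = 1} := by
    rw [mul_sum, ← sum_add_distrib, card_filter, ← sum_add_distrib]
    exact sum_congr rfl fun a _ => Nat.sq_sub_two_mul_add_two_mul (f a)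
  omega

theorem sum_comp_eq_sum_mul_card_fiber {α : Type*} [Fintype α] (f : α → ℕ) (g : ℕ → ℕ)
    (t : Finset ℕ) (hg : ∀ a, f a ∉ t → g (f a) = 0) :
    ∑ a, g (f a) = ∑ m ∈ t, g m * #{a | f a = m} := by
  rw [← sum_filter_of_ne (p := fun a => f a ∈ t) fun a _ h => by_contra fun ht => h (hg a ht),
    ← sum_fiberwise_eq_sum_filter]
  refine sum_congr rfl fun m _ => ?_
  rw [sum_congr rfl fun a ha => by rw [(mem_filter.mp ha).2], sum_const, smul_eq_mul, mul_comm]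

section Lines
variable {F : Type*} [Field F] [Fintype F] [DecidableEq F]

theorem card_filter_memLine (s : Option F) (c : F) :
    #{P : F × F | memLine s c P} = Fintype.card F := by
  rw [← card_univ]
  cases s with
  | none =>
    refine card_bij' (fun P _ => P.2) (fun y _ => (c, y)) ?_ ?_ ?_ ?_ <;>
      simp only [mem_filter, mem_univ, true_and] <;> simp +contextual [memLine]
  | some m =>
    refine card_bij' (fun P _ => P.1) (fun x _ => (x, m * x + c)) ?_ ?_ ?_ ?_ <;>
      simp only [mem_filter, mem_univ, true_and] <;> simp +contextual [memLine]

theorem card_filter_memLine_none_and_some (c m d : F) :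
    #{P : F × F | memLine none c P ∧ memLine (some m) d P} = 1 :=
  card_eq_one.mpr ⟨(c, m * c + d), by
    ext ⟨x, y⟩
    rw [mem_filter, mem_singleton]
    simp only [mem_univ, true_and, memLine, Prod.mk.injEq]
    constructor <;> rintro ⟨rfl, rfl⟩ <;> exact ⟨rfl, rfl⟩⟩

theorem card_filter_memLine_some_and_some {m n : F} (hmn : m ≠ n) (c d : F) :
    #{P : F × F | memLine (some m) c P ∧ memLine (some n) d P} = 1 := by
  have hm : m - n ≠ 0 := sub_ne_zero.mpr hmn
  refine card_eq_one.mpr ⟨((d - c) / (m - n), m * ((d - c) / (m - n)) + c), ?_⟩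
  ext ⟨x, y⟩
  rw [mem_filter, mem_singleton]
  simp only [mem_univ, true_and, memLine, Prod.mk.injEq]
  constructor
  · rintro ⟨rfl, h⟩
    have hx : x = (d - c) / (m - n) := by rw [eq_div_iff hm]; linear_combination h
    exact ⟨hx, by rw [hx]⟩
  · rintro ⟨rfl, rfl⟩
    refine ⟨rfl, ?_⟩
    field_simp
    ring

theorem card_filter_memLine_and_memLine {s t : Option F} (hst : s ≠ t) (c d : F) :
    #{P : F × F | memLine s c P ∧ memLine t d P} = 1 := by
  match s, t with
  | none, none => exact absurd rfl hst
  | none, some m => exact card_filter_memLine_none_and_some c m d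
  | some m, none => simpa only [and_comm] using card_filter_memLine_none_and_some d m c
  | some m, some n => exact card_filter_memLine_some_and_some (fun h => hst (congrArg some h)) c d

theorem multPt_le (b : Option F → F) (P : F × F) : multPt b P ≤ Fintype.card F + 1 :=
  (card_filter_le _ _).trans (by rw [card_univ, Fintype.card_option])

theorem sum_sq_multPt (b : Option F → F) :
    ∑ P : F × F, multPt b P ^ 2 = 2 * ∑ P : F × F, multPt b P :=
  sum_sq_card_filter_rel_eq_two_mul (fun i P => memLine i (b i) P) (Fintype.card F)
    Fintype.card_option (fun i => card_filter_memLine i (b i))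
    (fun i j hij => card_filter_memLine_and_memLine hij (b i) (b j))

end Lines

/-- For every minimal Besicovitch arrangement `B` in `𝔽_q²`,
`x_1^B = ∑_{m=3}^{q+1} (m² − 2m)·x_m^B`. -/
theorem stmt5 {F : Type*} [Field F] [Fintype F] [DecidableEq F]
    (q : ℕ) (hq : Fintype.card F = q) (b : Option F → F) :
    xCount b 1 = ∑ m ∈ Finset.Icc 3 (q + 1), (m ^ 2 - 2 * m) * xCount b m := by
  subst hq
  rw [xCount, card_filter_eq_one_eq_sum_sq_sub_two_mul _ (sum_sq_multPt b)]
  refine sum_comp_eq_sum_mul_card_fiber _ (fun m => m ^ 2 - 2 * m) _ fun P hP => ?_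
  have hle : multPt b P ≤ 2 := by
    have := multPt_le b P
    simp only [mem_Icc, not_and, not_le] at hP
    omega
  exact Nat.sub_eq_zero_of_le (by nlinarith)
end

section
/- The maximum over all minimal Besicovitch arrangements B in 𝔽_q² of the number x_1^B of points of multiplicity 1 equals q² − 1; that is, x_1^B ≤ q² − 1 for every such B, and this bound is attained (for instance by the arrangement of all q+1 lines through the origin). -/
open Finset

/-!
Any two lines of different slopes meet, e.g. the vertical line `x = b ∞` and the horizontal
line `y = b 0` meet in a point of multiplicity at least `2`, so at most `q² - 1` points have
multiplicity `1`. For the pencil of all lines through the origin, the origin has multiplicity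
`q + 1`, and every other point lies on exactly one line of the pencil, since two distinct
lines through the origin meet only there.
-/

section Lines

variable {F : Type*} [Field F]

@[simp] lemma memLine_none (c : F) (P : F × F) : memLine none c P ↔ P.1 = c := Iff.rfl

@[simp] lemma memLine_some (m c : F) (P : F × F) :
    memLine (some m) c P ↔ P.2 = m * P.1 + c := Iff.rfl

lemma memLine_zero_origin (s : Option F) : memLine s 0 (0 : F × F) := by
  cases s <;> simp

lemma exists_memLine_zero (P : F × F) : ∃ s, memLine s 0 P := by
  by_cases h : P.1 = 0
  · exact ⟨none, h⟩
  · exact ⟨some (P.2 / P.1), by simp [div_mul_cancel₀ _ h]⟩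

lemma eq_zero_of_memLine_zero {s t : Option F} (hst : s ≠ t) {P : F × F}
    (hs : memLine s 0 P) (ht : memLine t 0 P) : P = 0 := by
  cases s <;> cases t
  · exact absurd rfl hst
  · simp only [memLine_none, memLine_some] at hs ht
    ext <;> simp [hs, ht]
  · simp only [memLine_none, memLine_some] at hs ht
    ext <;> simp [hs, ht]
  · rename_i m n
    simp only [memLine_some, add_zero] at hs ht
    have hmn : m - n ≠ 0 := sub_ne_zero.mpr fun h => hst (congrArg some h)
    have h1 : P.1 = 0 := by
      refine (mul_eq_zero.mp ?_).resolve_left hmn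
      rw [sub_mul, ← hs, ← ht, sub_self]
    ext <;> simp [h1, hs]

end Lines

section Multiplicity

variable {F : Type*} [Field F] [Fintype F] [DecidableEq F]

lemma one_lt_multPt {b : Option F → F} {P : F × F} {s t : Option F} (hst : s ≠ t)
    (hs : memLine s (b s) P) (ht : memLine t (b t) P) : 1 < multPt b P :=
  one_lt_card.mpr ⟨s, by simpa using hs, t, by simpa using ht, hst⟩

lemma exists_one_lt_multPt (b : Option F → F) : ∃ P, 1 < multPt b P :=
  ⟨(b none, b (some 0)), one_lt_multPt (s := none) (t := some 0) (by simp) rfl (by simp)⟩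

lemma xCount_one_lt (b : Option F → F) : xCount b 1 < Fintype.card F ^ 2 := by
  obtain ⟨P, hP⟩ := exists_one_lt_multPt b
  rw [sq, ← Fintype.card_prod, ← card_univ]
  exact card_lt_card (filter_ssubset.mpr ⟨P, mem_univ _, hP.ne'⟩)

lemma multPt_const_zero_origin : multPt (fun _ => (0 : F)) 0 = Fintype.card F + 1 := by
  rw [multPt, filter_true_of_mem fun s _ => memLine_zero_origin s, card_univ,
    Fintype.card_option]

lemma multPt_const_zero_of_ne_zero {P : F × F} (hP : P ≠ 0) :
    multPt (fun _ => (0 : F)) P = 1 := by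
  obtain ⟨s, hs⟩ := exists_memLine_zero P
  refine le_antisymm (card_le_one.mpr fun t ht u hu => ?_) (card_pos.mpr ⟨s, by simpa using hs⟩)
  by_contra htu
  exact hP (eq_zero_of_memLine_zero htu (mem_filter.mp ht).2 (mem_filter.mp hu).2)

lemma xCount_const_zero_one : xCount (fun _ => (0 : F)) 1 = Fintype.card F ^ 2 - 1 := by
  have h : univ.filter (fun P => multPt (fun _ => (0 : F)) P = 1) = univ.erase 0 := by
    ext P
    rcases eq_or_ne P 0 with rfl | hP
    · simp [multPt_const_zero_origin, Fintype.card_ne_zero]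
    · simp [hP, multPt_const_zero_of_ne_zero hP]
  rw [xCount, h, card_erase_of_mem (mem_univ _), card_univ, Fintype.card_prod, sq]

end Multiplicity

/-- The maximum of `x_1^B` over all minimal Besicovitch arrangements `B` in `𝔽_q²` is `q² − 1`:
`x_1^B ≤ q² − 1` for every such `B`, and the bound is attained, for instance by the
arrangement of all `q+1` lines through the origin. -/
theorem stmt9 {F : Type*} [Field F] [Fintype F] [DecidableEq F]
    (q : ℕ) (hq : Fintype.card F = q) :
    (∀ b : Option F → F, xCount b 1 ≤ q ^ 2 - 1) ∧
      xCount (fun _ : Option F => (0 : F)) 1 = q ^ 2 - 1 := by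
  subst hq
  exact ⟨fun b => Nat.le_sub_one_of_lt (xCount_one_lt b), xCount_const_zero_one⟩
end
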